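/- The number of Dyck paths of semilength k+n that begin with at least k upsteps equals the generalized Catalan number C_n^(k) = ((k+1)/(2n+k+1)) * binomial(2n+k+1, n). -/

import Mathlib

/-!
A Dyck path of semilength `k + n` that starts with `k` upsteps is `k` upsteps followed by a
path of `2n + k` steps from height `k` down to `0` that never goes below `0`. Sorting these
paths by their first step shows that their number satisfies the ballot recurrence
`g (n+1) (k+1) = g n (k+2) + g (n+1) k`, `g (n+1) 0 = g n 1`, `g 0 k = 1`, and so does `gc`.
-/

def gc (n k : ℕ) : ℚ := ((k : ℚ) + 1) / (2 * (n : ℚ) + (k : ℚ) + 1) * ((2 * n + k + 1).choose n : ℚ)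

def cat (n : ℕ) : ℚ := 1 / ((n : ℚ) + 1) * ((2 * n).choose n : ℚ)

def Cond {n : ℕ} (u : Fin n → ℕ) : Prop :=
  ∀ i j : Fin n, i < j →
    ¬(1 ≤ (u j : ℤ) - (((j : ℕ) : ℤ) - ((i : ℕ) : ℤ)) ∧
      (u j : ℤ) - (((j : ℕ) : ℤ) - ((i : ℕ) : ℤ)) ≤ (u i : ℤ) - 1)

lemma gc_zero_left (k : ℕ) : gc 0 k = 1 := by
  simp [gc]
  positivity

lemma cast_choose_succ_succ (m n : ℕ) :
    ((m + 1).choose (n + 1) : ℚ) = (m + 1) * m.choose n / (n + 1) := by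
  rw [eq_div_iff (by positivity)]
  exact_mod_cast (Nat.add_one_mul_choose_eq m n).symm

lemma cast_choose_succ_right (m n : ℕ) :
    (m.choose (n + 1) : ℚ) = m.choose n * (m - n : ℕ) / (n + 1) := by
  rw [eq_div_iff (by positivity)]
  exact_mod_cast Nat.choose_succ_right_eq m n

lemma gc_succ_zero (n : ℕ) : gc (n + 1) 0 = gc n 1 := by
  rw [gc, gc, show 2 * (n + 1) + 0 + 1 = (2 * n + 2) + 1 by ring, cast_choose_succ_succ]
  push_cast
  field_simp
  ring

lemma gc_succ_succ (n k : ℕ) : gc (n + 1) (k + 1) = gc n (k + 2) + gc (n + 1) k := by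
  rw [gc, gc, gc, show 2 * (n + 1) + (k + 1) + 1 = (2 * n + k + 3) + 1 by omega,
    show 2 * n + (k + 2) + 1 = 2 * n + k + 3 by omega,
    show 2 * (n + 1) + k + 1 = 2 * n + k + 3 by omega, cast_choose_succ_succ,
    cast_choose_succ_right, show 2 * n + k + 3 - n = n + k + 3 by omega]
  push_cast
  field_simp
  ring

/-- Step lists of paths from height `h` down to `0` that never go below `0`; the heights along
the path are `h + p.sum` for the prefixes `p`. -/
def pathsToZero (m : ℕ) (h : ℤ) : Set (List ℤ) :=
  {l | l.length = m ∧ (∀ x ∈ l, x = 1 ∨ x = -1) ∧ (∀ p, p <+: l → -h ≤ p.sum) ∧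
    l.sum = -h}

lemma List.forall_prefix_cons_iff {α : Type*} {P : List α → Prop} {a : α} {l : List α} :
    (∀ p, p <+: a :: l → P p) ↔ P [] ∧ ∀ q, q <+: l → P (a :: q) := by
  constructor
  · intro H
    exact ⟨H [] List.nil_prefix, fun q hq => H _ (List.cons_prefix_cons.2 ⟨rfl, hq⟩)⟩
  · rintro ⟨hnil, hcons⟩ p hp
    rcases List.prefix_cons_iff.1 hp with rfl | ⟨q, rfl, hq⟩
    exacts [hnil, hcons q hq]

lemma cons_mem_pathsToZero_iff {m : ℕ} {h x : ℤ} {t : List ℤ} :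
    x :: t ∈ pathsToZero (m + 1) h ↔
      (x = 1 ∨ x = -1) ∧ 0 ≤ h ∧ t ∈ pathsToZero m (h + x) := by
  have shift : ∀ s : ℤ, -h ≤ x + s ↔ -(h + x) ≤ s := fun s => by omega
  simp only [pathsToZero, Set.mem_ofPred_eq, List.length_cons, List.mem_cons, forall_eq_or_imp,
    List.forall_prefix_cons_iff, List.sum_cons, List.sum_nil, shift, Left.neg_nonpos_iff]
  constructor
  · rintro ⟨hlen, ⟨hx, hmem⟩, ⟨hh, hpre⟩, hsum⟩
    exact ⟨hx, hh, by omega, hmem, hpre, by omega⟩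
  · rintro ⟨hx, hh, hlen, hmem, hpre, hsum⟩
    exact ⟨by omega, ⟨hx, hmem⟩, ⟨hh, hpre⟩, by omega⟩

lemma pathsToZero_eq_empty_of_neg {m : ℕ} {h : ℤ} (hh : h < 0) : pathsToZero m h = ∅ :=
  Set.eq_empty_of_forall_notMem fun _ ⟨_, _, hpre, _⟩ => by
    have := hpre [] List.nil_prefix
    simp at this
    omega

lemma pathsToZero_eq_empty_of_lt {m : ℕ} {h : ℤ} (hm : (m : ℤ) < h) : pathsToZero m h = ∅ :=
  Set.eq_empty_of_forall_notMem fun l ⟨hlen, hmem, _, hsum⟩ => by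
    have := l.card_nsmul_le_sum (-1) fun x hx => by rcases hmem x hx with rfl | rfl <;> norm_num
    simp only [hlen, hsum, nsmul_eq_mul, mul_neg_one] at this
    omega

lemma pathsToZero_zero_zero : pathsToZero 0 0 = {[]} := by
  ext l
  simp +contextual [pathsToZero, List.length_eq_zero_iff]

lemma pathsToZero_succ {m : ℕ} {h : ℤ} (hh : 0 ≤ h) :
    pathsToZero (m + 1) h =
      List.cons 1 '' pathsToZero m (h + 1) ∪ List.cons (-1) '' pathsToZero m (h - 1) := by
  ext (_ | ⟨x, t⟩)
  · simp [pathsToZero]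
  · simp only [cons_mem_pathsToZero_iff, Set.mem_union, Set.mem_image, List.cons.injEq]
    constructor
    · rintro ⟨rfl | rfl, -, ht⟩
      exacts [Or.inl ⟨t, ht, rfl, rfl⟩,
        Or.inr ⟨t, by simpa [sub_eq_add_neg] using ht, rfl, rfl⟩]
    · rintro (⟨t, ht, rfl, rfl⟩ | ⟨t, ht, rfl, rfl⟩)
      exacts [⟨Or.inl rfl, hh, ht⟩, ⟨Or.inr rfl, hh, by simpa [sub_eq_add_neg] using ht⟩]

lemma pathsToZero_finite (m : ℕ) (h : ℤ) : (pathsToZero m h).Finite := by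
  induction m generalizing h with
  | zero =>
    refine (Set.finite_singleton []).subset fun l hl => ?_
    simpa [List.length_eq_zero_iff] using hl.1
  | succ m ih =>
    rcases lt_or_ge h 0 with hh | hh
    · simp [pathsToZero_eq_empty_of_neg hh]
    · rw [pathsToZero_succ hh]
      exact ((ih _).image _).union ((ih _).image _)

lemma ncard_pathsToZero_succ {m : ℕ} {h : ℤ} (hh : 0 ≤ h) :
    (pathsToZero (m + 1) h).ncard =
      (pathsToZero m (h + 1)).ncard + (pathsToZero m (h - 1)).ncard := by
  have disj : Disjoint (List.cons 1 '' pathsToZero m (h + 1))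
      (List.cons (-1) '' pathsToZero m (h - 1)) :=
    Set.disjoint_left.2 (by rintro _ ⟨_, _, rfl⟩ ⟨_, _, h⟩; simp at h)
  rw [pathsToZero_succ hh, Set.ncard_union_eq disj ((pathsToZero_finite _ _).image _)
    ((pathsToZero_finite _ _).image _), Set.ncard_image_of_injective _ List.cons_injective,
    Set.ncard_image_of_injective _ List.cons_injective]

theorem ncard_pathsToZero (n k : ℕ) : ((pathsToZero (2 * n + k) k).ncard : ℚ) = gc n k := by
  induction n generalizing k with
  | zero =>
    induction k with
    | zero => simp [pathsToZero_zero_zero, gc_zero_left]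
    | succ k ih =>
      rw [gc_zero_left, Nat.mul_zero, zero_add] at ih ⊢
      rw [Nat.cast_succ, ncard_pathsToZero_succ (by positivity),
        pathsToZero_eq_empty_of_lt (by omega)]
      simpa using ih
  | succ n ih =>
    induction k with
    | zero =>
      rw [gc_succ_zero, ← ih 1, show 2 * (n + 1) + 0 = (2 * n + 1) + 1 by ring, Nat.cast_zero,
        Nat.cast_one, ncard_pathsToZero_succ le_rfl, zero_sub,
        pathsToZero_eq_empty_of_neg neg_one_lt_zero]
      simp
    | succ k ihk =>
      rw [gc_succ_succ, ← ih (k + 2), ← ihk,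
        show 2 * (n + 1) + (k + 1) = (2 * (n + 1) + k) + 1 by ring, Nat.cast_succ,
        ncard_pathsToZero_succ (by positivity), add_sub_cancel_right,
        show (k : ℤ) + 1 + 1 = (k + 2 : ℕ) by push_cast; ring,
        show 2 * (n + 1) + k = 2 * n + (k + 2) by ring, Nat.cast_add]

lemma List.mem_image_append_iff {α : Type*} {S : Set (List α)} {u l : List α} :
    l ∈ (u ++ ·) '' S ↔ l.take u.length = u ∧ l.drop u.length ∈ S := by
  constructor
  · rintro ⟨m, hm, rfl⟩
    simp [hm]
  · rintro ⟨htake, hdrop⟩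
    refine ⟨l.drop u.length, hdrop, ?_⟩
    nth_rw 1 [← htake]
    exact List.take_append_drop u.length l

lemma replicate_one_append_mem_pathsToZero_iff {h : ℤ} (hh : 0 ≤ h) (j m : ℕ) (l : List ℤ) :
    List.replicate j 1 ++ l ∈ pathsToZero (j + m) h ↔ l ∈ pathsToZero m (h + j) := by
  induction j generalizing h with
  | zero => simp
  | succ j ih =>
    rw [List.replicate_succ, List.cons_append, show j + 1 + m = (j + m) + 1 by ring,
      cons_mem_pathsToZero_iff, ih (by omega), Nat.cast_succ, add_comm (j : ℤ), ← add_assoc]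
    simp [hh]

theorem stmt3 (n k : ℕ) :
    ({l : List ℤ | l.length = 2 * (k + n) ∧ (∀ x ∈ l, x = 1 ∨ x = -1) ∧
      (∀ p : List ℤ, p <+: l → 0 ≤ p.sum) ∧ l.sum = 0 ∧
      l.take k = List.replicate k 1}.ncard : ℚ) = gc n k := by
  rw [← ncard_pathsToZero, ← Set.ncard_image_of_injective (pathsToZero (2 * n + k) k)
    (List.append_right_injective (List.replicate k 1))]
  congr 2
  ext l
  have drop_mem_iff (htake : l.take k = List.replicate k 1) :
      l ∈ pathsToZero (k + (2 * n + k)) 0 ↔ l.drop k ∈ pathsToZero (2 * n + k) k := by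
    rw [← List.take_append_drop k l, htake, replicate_one_append_mem_pathsToZero_iff le_rfl,
      List.drop_left' List.length_replicate, zero_add]
  rw [List.mem_image_append_iff, List.length_replicate]
  constructor
  · rintro ⟨hlen, hmem, hpre, hsum, htake⟩
    exact ⟨htake,
      (drop_mem_iff htake).1 ⟨by omega, hmem, by simpa using hpre, by simpa using hsum⟩⟩
  · rintro ⟨htake, hdrop⟩
    obtain ⟨hlen, hmem, hpre, hsum⟩ := (drop_mem_iff htake).2 hdrop
    exact ⟨by omega, hmem, by simpa using hpre, by simpa using hsum, htake⟩
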